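/- The stylic monoid Styl(A) is J-trivial: if u, v ∈ Styl(A) generate the same two-sided ideal (Styl(A)·u·Styl(A) = Styl(A)·v·Styl(A)), then u = v. -/

import Mathlib

/-- Schensted column insertion of a letter `x` into a column `γ` (a subset of the
alphabet `A`): if `x` is greater than every element of `γ`, then `x·γ = γ ∪ {x}`;
otherwise, `y` being the smallest element of `γ` with `y ≥ x`,
`x·γ = (γ \ {y}) ∪ {x}`. -/
def colInsert {A : Type*} [LinearOrder A] (x : A) (γ : Finset A) : Finset A :=
  if h : (γ.filter (fun y => x ≤ y)).Nonempty then
    insert x (γ.erase ((γ.filter (fun y => x ≤ y)).min' h))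
  else insert x γ

/-- The left action of a word `w ∈ A*` on a column: iterated Schensted column
insertion of the letters of `w`, rightmost letter first. -/
def colAct {A : Type*} [LinearOrder A] (w : List A) (γ : Finset A) : Finset A :=
  w.foldr colInsert γ

/-- The stylic congruence: two words are equivalent iff they have the same action
on every column. -/
def StylEq {A : Type*} [LinearOrder A] (u v : List A) : Prop :=
  ∀ γ : Finset A, colAct u γ = colAct v γ

/-- The action of a word as an endofunction of the set of columns. -/
def colActEnd {A : Type*} [LinearOrder A] (w : List A) : Function.End (Finset A) :=
  fun γ => colAct w γ

/-- The stylic monoid `Styl(A)`: the submonoid of endofunctions of the set of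
columns induced by the action of the free monoid `A*`. -/
def stylMonoid (A : Type*) [LinearOrder A] : Submonoid (Function.End (Finset A)) where
  carrier := Set.range (colActEnd (A := A))
  one_mem' := ⟨[], rfl⟩
  mul_mem' := by
    rintro f g ⟨u, rfl⟩ ⟨v, rfl⟩
    exact ⟨u ++ v, by
      funext γ
      exact List.foldr_append ..⟩

set_option linter.unusedSectionVars false

section Lemmas
variable {A : Type*} [LinearOrder A]

lemma min'_eq_of (s : Finset A) (h : s.Nonempty) {m : A} (hm : m ∈ s)
    (hall : ∀ e ∈ s, m ≤ e) : s.min' h = m :=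
  le_antisymm (Finset.min'_le s m hm) (Finset.le_min' _ _ _ hall)

lemma mem_colInsert_self (x : A) (γ : Finset A) : x ∈ colInsert x γ := by
  unfold colInsert; split <;> exact Finset.mem_insert_self ..

lemma colInsert_of_mem {x : A} {γ : Finset A} (hx : x ∈ γ) : colInsert x γ = γ := by
  have hne : (γ.filter (fun y => x ≤ y)).Nonempty :=
    ⟨x, Finset.mem_filter.2 ⟨hx, le_rfl⟩⟩
  have hmin : (γ.filter (fun y => x ≤ y)).min' hne = x :=
    min'_eq_of _ _ (Finset.mem_filter.2 ⟨hx, le_rfl⟩)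
      (fun y hy => (Finset.mem_filter.1 hy).2)
  rw [colInsert, dif_pos hne, hmin, Finset.insert_erase hx]

lemma colInsert_dichotomy {y z : A} (hyz : y < z) (γ : Finset A) :
    colInsert y (colInsert z γ) = colInsert z (colInsert y γ) ∨
      colInsert y (colInsert z γ) = colInsert y γ := by
  by_cases hzγ : z ∈ γ
  · right; rw [colInsert_of_mem hzγ]
  by_cases hFy : (γ.filter (fun e => y ≤ e)).Nonempty
  · by_cases hFz : (γ.filter (fun e => z ≤ e)).Nonempty
    · -- both nonempty
      set my := (γ.filter (fun e => y ≤ e)).min' hFy with hmydef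
      set mz := (γ.filter (fun e => z ≤ e)).min' hFz with hmzdef
      have hmyγ : my ∈ γ := (Finset.mem_filter.1 (Finset.min'_mem _ hFy)).1
      have hymy : y ≤ my := (Finset.mem_filter.1 (Finset.min'_mem _ hFy)).2
      have hmzγ : mz ∈ γ := (Finset.mem_filter.1 (Finset.min'_mem _ hFz)).1
      have hzmz : z ≤ mz := (Finset.mem_filter.1 (Finset.min'_mem _ hFz)).2
      have hmymz : my ≤ mz :=
        Finset.min'_le _ _ (Finset.mem_filter.2 ⟨hmzγ, le_of_lt (lt_of_lt_of_le hyz hzmz)⟩)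
      have hzint : colInsert z γ = insert z (γ.erase mz) := by
        rw [colInsert, dif_pos hFz]
      have hyint : colInsert y γ = insert y (γ.erase my) := by
        rw [colInsert, dif_pos hFy]
      by_cases hzm : z ≤ my
      · -- D1 : merge
        right
        have hmeq : my = mz := le_antisymm hmymz
          (Finset.min'_le _ _ (Finset.mem_filter.2 ⟨hmyγ, hzm⟩))
        have hfilt : (insert z (γ.erase mz)).filter (fun e => y ≤ e)
            = insert z ((γ.filter (fun e => y ≤ e)).erase mz) := by
          rw [Finset.filter_insert, if_pos (le_of_lt hyz), Finset.filter_erase]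
        have hne2 : ((insert z (γ.erase mz)).filter (fun e => y ≤ e)).Nonempty := by
          rw [hfilt]; exact ⟨z, Finset.mem_insert_self _ _⟩
        have hmin2 : ((insert z (γ.erase mz)).filter (fun e => y ≤ e)).min' hne2 = z := by
          apply min'_eq_of
          · rw [hfilt]; exact Finset.mem_insert_self _ _
          · intro e he
            rw [hfilt] at he
            rcases Finset.mem_insert.1 he with rfl | he
            · exact le_rfl
            · obtain ⟨hne, hef⟩ := Finset.mem_erase.1 he
              have h1 : my ≤ e := Finset.min'_le _ _ hef
              have h2 : my < e := lt_of_le_of_ne h1 (fun hh => hne (hh.symm.trans hmeq))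
              exact le_trans hzm h2.le
        rw [hzint, hyint, colInsert, dif_pos hne2, hmin2,
          Finset.erase_insert (by simp [hzγ]), hmeq]
      · -- D2 : commute
        left
        have hmyz : my < z := lt_of_not_ge hzm
        have hmymzne : my ≠ mz := ne_of_lt (lt_of_lt_of_le hmyz hzmz)
        -- LHS
        have hfilt : (insert z (γ.erase mz)).filter (fun e => y ≤ e)
            = insert z ((γ.filter (fun e => y ≤ e)).erase mz) := by
          rw [Finset.filter_insert, if_pos (le_of_lt hyz), Finset.filter_erase]
        have hne2 : ((insert z (γ.erase mz)).filter (fun e => y ≤ e)).Nonempty := by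
          rw [hfilt]; exact ⟨z, Finset.mem_insert_self _ _⟩
        have hmin2 : ((insert z (γ.erase mz)).filter (fun e => y ≤ e)).min' hne2 = my := by
          apply min'_eq_of
          · rw [hfilt]
            exact Finset.mem_insert_of_mem
              (Finset.mem_erase.2 ⟨hmymzne, Finset.min'_mem _ hFy⟩)
          · intro e he
            rw [hfilt] at he
            rcases Finset.mem_insert.1 he with rfl | he
            · exact le_of_lt hmyz
            · exact Finset.min'_le _ _ (Finset.mem_erase.1 he).2
        -- RHS
        have hfilt' : (insert y (γ.erase my)).filter (fun e => z ≤ e)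
            = (γ.filter (fun e => z ≤ e)).erase my := by
          rw [Finset.filter_insert, if_neg (not_le_of_gt hyz), Finset.filter_erase]
        have hne3 : ((insert y (γ.erase my)).filter (fun e => z ≤ e)).Nonempty := by
          rw [hfilt']
          exact ⟨mz, Finset.mem_erase.2 ⟨hmymzne.symm, Finset.min'_mem _ hFz⟩⟩
        have hmin3 : ((insert y (γ.erase my)).filter (fun e => z ≤ e)).min' hne3 = mz := by
          apply min'_eq_of
          · rw [hfilt']
            exact Finset.mem_erase.2 ⟨hmymzne.symm, Finset.min'_mem _ hFz⟩
          · intro e he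
            rw [hfilt'] at he
            exact Finset.min'_le _ _ (Finset.mem_erase.1 he).2
        rw [hzint, hyint, colInsert, dif_pos hne2, hmin2, colInsert, dif_pos hne3, hmin3,
          Finset.erase_insert_of_ne (ne_of_gt hmyz),
          Finset.erase_insert_of_ne (ne_of_lt (lt_of_lt_of_le hyz hzmz)),
          Finset.insert_comm, Finset.erase_right_comm]
    · -- C : Fy nonempty, Fz empty : commute
      left
      set my := (γ.filter (fun e => y ≤ e)).min' hFy with hmydef
      have hmyγ : my ∈ γ := (Finset.mem_filter.1 (Finset.min'_mem _ hFy)).1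
      have hlt : ∀ e ∈ γ, e < z := by
        intro e he
        by_contra hc
        exact hFz ⟨e, Finset.mem_filter.2 ⟨he, le_of_not_gt hc⟩⟩
      have hzins : colInsert z γ = insert z γ := by rw [colInsert, dif_neg hFz]
      have hyint : colInsert y γ = insert y (γ.erase my) := by
        rw [colInsert, dif_pos hFy]
      have hfilt : (insert z γ).filter (fun e => y ≤ e)
           = insert z (γ.filter (fun e => y ≤ e)) := by
        rw [Finset.filter_insert, if_pos (le_of_lt hyz)]
      have hne2 : ((insert z γ).filter (fun e => y ≤ e)).Nonempty := by
        rw [hfilt]; exact ⟨z, Finset.mem_insert_self _ _⟩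
      have hmin2 : ((insert z γ).filter (fun e => y ≤ e)).min' hne2 = my := by
        apply min'_eq_of
        · rw [hfilt]; exact Finset.mem_insert_of_mem (Finset.min'_mem _ hFy)
        · intro e he
          rw [hfilt] at he
          rcases Finset.mem_insert.1 he with rfl | he
          · exact le_of_lt (hlt my hmyγ)
          · exact Finset.min'_le _ _ he
      have hfilt' : (insert y (γ.erase my)).filter (fun e => z ≤ e) = ∅ := by
        rw [Finset.filter_insert, if_neg (not_le_of_gt hyz), Finset.filter_erase,
          Finset.not_nonempty_iff_eq_empty.1 hFz, Finset.erase_empty]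
      have hne3 : ¬ ((insert y (γ.erase my)).filter (fun e => z ≤ e)).Nonempty := by
        rw [hfilt']; exact Finset.not_nonempty_empty
      rw [hzins, hyint, colInsert, dif_pos hne2, hmin2, colInsert, dif_neg hne3,
        Finset.erase_insert_of_ne (ne_of_gt (hlt my hmyγ)), Finset.insert_comm]
  · -- B : Fy empty (hence Fz empty) : merge
    right
    have hFz : ¬ (γ.filter (fun e => z ≤ e)).Nonempty := by
      intro ⟨e, he⟩
      obtain ⟨heγ, hez⟩ := Finset.mem_filter.1 he
      exact hFy ⟨e, Finset.mem_filter.2 ⟨heγ, le_of_lt (lt_of_lt_of_le hyz hez)⟩⟩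
    have hzins : colInsert z γ = insert z γ := by rw [colInsert, dif_neg hFz]
    have hfilt : (insert z γ).filter (fun e => y ≤ e) = {z} := by
      rw [Finset.filter_insert, if_pos (le_of_lt hyz),
        Finset.not_nonempty_iff_eq_empty.1 hFy]
      rfl
    have hne2 : ((insert z γ).filter (fun e => y ≤ e)).Nonempty := by
      rw [hfilt]; exact ⟨z, Finset.mem_singleton_self _⟩
    have hmin2 : ((insert z γ).filter (fun e => y ≤ e)).min' hne2 = z := by
      apply min'_eq_of
      · rw [hfilt]; exact Finset.mem_singleton_self _
      · intro e he; rw [hfilt, Finset.mem_singleton] at he; exact le_of_eq he.symm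
    rw [hzins, colInsert, dif_pos hne2, hmin2, Finset.erase_insert hzγ,
      colInsert, dif_neg hFy]

end Lemmas
section Rest
variable {A : Type*} [LinearOrder A]

lemma colAct_append (s t : List A) (γ : Finset A) :
    colAct (s ++ t) γ = colAct s (colAct t γ) :=
  List.foldr_append ..

lemma colAct_cons (x : A) (t : List A) (γ : Finset A) :
    colAct (x :: t) γ = colInsert x (colAct t γ) := rfl

lemma colAct_concat (t : List A) (y : A) (γ : Finset A) :
    colAct (t ++ [y]) γ = colAct t (colInsert y γ) := by
  rw [colAct_append]; rfl

lemma colAct_fix {w : List A} {γ : Finset A} (h : ∀ x ∈ w, x ∈ γ) :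
    colAct w γ = γ := by
  induction w with
  | nil => rfl
  | cons x t ih =>
    rw [colAct_cons, ih (fun y hy => h y (List.mem_cons_of_mem _ hy)),
      colInsert_of_mem (h x (List.mem_cons_self))]

/-- the chain lemma: an extra first insertion of `x` is absorbed after a word of
letters `< x` followed by an insertion of `x`. -/
lemma chain_absorb {x : A} (m : List A) (hm : ∀ y ∈ m, y < x) (γ : Finset A) :
    colInsert x (colAct m (colInsert x γ)) = colInsert x (colAct m γ) := by
  induction m using List.reverseRecOn generalizing γ with
  | nil => exact colInsert_of_mem (mem_colInsert_self x γ)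
  | append_singleton t y ih =>
    have hy : y < x := hm y (by simp)
    have ht : ∀ z ∈ t, z < x := fun z hz => hm z (by simp [hz])
    rw [colAct_concat, colAct_concat]
    rcases colInsert_dichotomy hy γ with hc | hc
    · rw [hc]
      exact ih ht (colInsert y γ)
    · rw [hc]

/-- descending word of a finset (so the smallest letter is inserted first). -/
def descWord (S : Finset A) : List A := (S.sort (· ≤ ·)).reverse

lemma mem_descWord {S : Finset A} {y : A} : y ∈ descWord S ↔ y ∈ S := by
  simp [descWord, Finset.mem_sort]

lemma descWord_insert {a : A} {S : Finset A} (h : ∀ x ∈ S, x < a) :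
    descWord (insert a S) = a :: descWord S := by
  have ha : a ∉ S := fun hc => lt_irrefl a (h a hc)
  have hsort : (insert a S).sort (· ≤ ·) = S.sort (· ≤ ·) ++ [a] := by
    apply List.Perm.eq_of_pairwise' (Finset.pairwise_sort _ _) ?_ ?_
    · apply List.pairwise_append.2
      refine ⟨Finset.pairwise_sort _ _, List.pairwise_singleton _ _, ?_⟩
      intro x hx b hb
      rw [List.mem_singleton] at hb
      subst hb
      exact le_of_lt (h x (by rwa [Finset.mem_sort] at hx))
    · refine ((Finset.sort_perm_toList _ _).trans ?_).trans
        ((List.perm_append_singleton _ _).symm)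
      exact (Finset.toList_insert ha).trans
        (List.Perm.cons a (Finset.sort_perm_toList _ _).symm)
  rw [descWord, hsort, List.reverse_append, List.reverse_singleton]
  rfl

/-- the ascending pass absorbs any insertion of a letter of `S` done beforehand. -/
lemma pass_absorb (S : Finset A) :
    ∀ x ∈ S, ∀ γ : Finset A,
      colAct (descWord S) (colInsert x γ) = colAct (descWord S) γ := by
  induction S using Finset.induction_on_max with
  | empty => intro x hx; exact absurd hx (Finset.notMem_empty x)
  | insert a S hmax ih =>
    intro x hx γ
    rw [descWord_insert hmax, colAct_cons, colAct_cons]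
    rcases Finset.mem_insert.1 hx with rfl | hx
    · exact chain_absorb (descWord S) (fun y hy => hmax y (mem_descWord.1 hy)) γ
    · rw [ih x hx γ]

lemma pass_absorb_word (S : Finset A) (m : List A) (hm : ∀ y ∈ m, y ∈ S) (γ : Finset A) :
    colAct (descWord S) (colAct m γ) = colAct (descWord S) γ := by
  induction m with
  | nil => rfl
  | cons y t ih =>
    rw [colAct_cons, pass_absorb S y (hm y (List.mem_cons_self)),
      ih (fun z hz => hm z (List.mem_cons_of_mem _ hz))]

end Rest

section Phi
variable {A : Type*} [LinearOrder A] [Fintype A]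

def wtF (z : A) : ℕ := (Finset.univ.filter (fun e => z ≤ e)).card

def phiF (γ : Finset A) : ℕ := ∑ z ∈ γ, wtF z

lemma wtF_lt_of_lt {x y : A} (h : x < y) : wtF y < wtF x := by
  apply Finset.card_lt_card
  constructor
  · intro e he
    rw [Finset.mem_filter] at he ⊢
    exact ⟨he.1, le_of_lt (lt_of_lt_of_le h he.2)⟩
  · intro hc
    have hx : x ∈ Finset.univ.filter (fun e => x ≤ e) :=
      Finset.mem_filter.2 ⟨Finset.mem_univ _, le_rfl⟩
    have := Finset.mem_filter.1 (hc hx)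
    exact absurd this.2 (not_le_of_gt h)

lemma phiF_colInsert (x : A) (γ : Finset A) :
    colInsert x γ = γ ∨ phiF γ < phiF (colInsert x γ) := by
  by_cases hx : x ∈ γ
  · left; exact colInsert_of_mem hx
  right
  rw [colInsert]
  split
  next h =>
    set m := (γ.filter (fun y => x ≤ y)).min' h with hm
    have hmγ : m ∈ γ := (Finset.mem_filter.1 (Finset.min'_mem _ h)).1
    have hxm : x ≤ m := (Finset.mem_filter.1 (Finset.min'_mem _ h)).2
    have hxmlt : x < m := lt_of_le_of_ne hxm (fun hc => hx (hc ▸ hmγ))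
    have hxne : x ∉ γ.erase m := fun hc => hx (Finset.mem_of_mem_erase hc)
    simp only [phiF]
    rw [Finset.sum_insert hxne]
    have h1 : ∑ z ∈ γ, wtF z = wtF m + ∑ z ∈ γ.erase m, wtF z := by
      rw [← Finset.add_sum_erase _ _ hmγ]
    rw [h1]
    exact Nat.add_lt_add_right (wtF_lt_of_lt hxmlt) _
  next h =>
    simp only [phiF]
    rw [Finset.sum_insert hx]
    have : 0 < wtF x :=
      Finset.card_pos.2 ⟨x, Finset.mem_filter.2 ⟨Finset.mem_univ _, le_rfl⟩⟩
    omega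

lemma phiF_le_colInsert (x : A) (γ : Finset A) : phiF γ ≤ phiF (colInsert x γ) := by
  rcases phiF_colInsert x γ with h | h
  · rw [h]
  · exact le_of_lt h

lemma phiF_le_colAct (w : List A) (γ : Finset A) : phiF γ ≤ phiF (colAct w γ) := by
  induction w with
  | nil => exact le_rfl
  | cons x t ih => exact le_trans ih (phiF_le_colInsert x (colAct t γ))

lemma mem_of_phiF_eq : ∀ (w : List A) (γ : Finset A),
    phiF (colAct w γ) = phiF γ → ∀ x ∈ w, x ∈ γ := by
  intro w
  induction w with
  | nil => intro γ _ x hx; exact absurd hx List.not_mem_nil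
  | cons y t ih =>
    intro γ heq x hx
    have h1 : phiF γ ≤ phiF (colAct t γ) := phiF_le_colAct t γ
    have h2 : phiF (colAct t γ) ≤ phiF (colAct (y :: t) γ) :=
      phiF_le_colInsert y (colAct t γ)
    have h3 : phiF (colAct t γ) = phiF γ := le_antisymm (by omega) h1
    have hlet : ∀ z ∈ t, z ∈ γ := ih γ h3
    have hfix : colAct t γ = γ := colAct_fix hlet
    have h4 : phiF (colInsert y γ) = phiF γ := by
      rw [← hfix]
      rw [colAct_cons, hfix] at heq
      rw [hfix]
      exact heq
    have h5 : colInsert y γ = γ := by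
      rcases phiF_colInsert y γ with h | h
      · exact h
      · omega
    rcases List.mem_cons.1 hx with rfl | hx
    · rw [← h5]; exact mem_colInsert_self x γ
    · exact hlet x hx

def phiBound (A : Type*) [LinearOrder A] [Fintype A] : ℕ := ∑ z : A, wtF z

lemma phiF_le_bound (γ : Finset A) : phiF γ ≤ phiBound A :=
  Finset.sum_le_sum_of_subset (Finset.subset_univ γ)

/-- word power -/
def wpow (w : List A) : ℕ → List A
  | 0 => []
  | k + 1 => w ++ wpow w k

lemma wpow_add (w : List A) (i j : ℕ) : wpow w (i + j) = wpow w i ++ wpow w j := by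
  induction i with
  | zero => simp [wpow]
  | succ n ih =>
    have : n + 1 + j = (n + j) + 1 := by omega
    rw [this, wpow, wpow, ih, List.append_assoc]

lemma mem_wpow {w : List A} {k : ℕ} {x : A} (hx : x ∈ wpow w k) : x ∈ w := by
  induction k with
  | zero => exact absurd hx List.not_mem_nil
  | succ n ih =>
    rw [wpow, List.mem_append] at hx
    exact hx.elim id ih

lemma stab (w : List A) (γ : Finset A) :
    ∀ x ∈ w, x ∈ colAct (wpow w (phiBound A + 1)) γ := by
  set N := phiBound A with hN
  -- find a step where phi does not increase
  obtain ⟨k, hk, heq⟩ :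
      ∃ k, k < N + 1 ∧
        phiF (colAct w (colAct (wpow w k) γ)) = phiF (colAct (wpow w k) γ) := by
    by_contra hc
    push_neg at hc
    have grow : ∀ j, j ≤ N + 1 → j ≤ phiF (colAct (wpow w j) γ) := by
      intro j
      induction j with
      | zero => intro _; exact Nat.zero_le _
      | succ n ih =>
        intro hn
        have h1 : n ≤ phiF (colAct (wpow w n) γ) := ih (by omega)
        have h2 : phiF (colAct w (colAct (wpow w n) γ)) ≠ phiF (colAct (wpow w n) γ) :=
          hc n (by omega)
        have h3 : phiF (colAct (wpow w n) γ) ≤ phiF (colAct w (colAct (wpow w n) γ)) :=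
          phiF_le_colAct w _
        have h4 : colAct (wpow w (n + 1)) γ = colAct w (colAct (wpow w n) γ) := by
          rw [wpow, colAct_append]
        rw [h4]
        omega
    have := grow (N + 1) le_rfl
    have := phiF_le_bound (colAct (wpow w (N + 1)) γ)
    omega
  set δ := colAct (wpow w k) γ with hδ
  have hmem : ∀ x ∈ w, x ∈ δ := mem_of_phiF_eq w δ heq
  have hfixw : colAct w δ = δ := colAct_fix hmem
  have hfixpow : ∀ j, colAct (wpow w j) δ = δ := by
    intro j
    induction j with
    | zero => rfl
    | succ n ih => rw [wpow, colAct_append, ih, hfixw]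
  have hsplit : wpow w (N + 1) = wpow w (N + 1 - k) ++ wpow w k := by
    rw [← wpow_add]
    congr 1
    omega
  intro x hx
  rw [hsplit, colAct_append, ← hδ, hfixpow]
  exact hmem x hx

lemma normal_form (w : List A) (γ : Finset A) :
    colAct (wpow w (phiBound A + 1)) γ = colAct (descWord w.toFinset) γ := by
  have h1 : colAct (descWord w.toFinset) (colAct (wpow w (phiBound A + 1)) γ)
      = colAct (wpow w (phiBound A + 1)) γ := by
    apply colAct_fix
    intro x hx
    exact stab w γ x (List.mem_toFinset.1 (mem_descWord.1 hx))
  have h2 : colAct (descWord w.toFinset) (colAct (wpow w (phiBound A + 1)) γ)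
      = colAct (descWord w.toFinset) γ :=
    pass_absorb_word _ _ (fun y hy => List.mem_toFinset.2 (mem_wpow hy)) γ
  rw [← h1, h2]

lemma absorb_right (w m : List A) (hm : ∀ x ∈ m, x ∈ w) (γ : Finset A) :
    colAct (wpow w (phiBound A + 1)) (colAct m γ) = colAct (wpow w (phiBound A + 1)) γ := by
  rw [normal_form, normal_form]
  exact pass_absorb_word _ _ (fun y hy => List.mem_toFinset.2 (hm y hy)) γ

lemma absorb_left (w m : List A) (hm : ∀ x ∈ m, x ∈ w) (γ : Finset A) :
    colAct m (colAct (wpow w (phiBound A + 1)) γ) = colAct (wpow w (phiBound A + 1)) γ :=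
  colAct_fix (fun x hx => stab w γ x (hm x hx))

end Phi

section Final
variable {A : Type*} [LinearOrder A] [Fintype A]

lemma wpow_succ_right (w : List A) (k : ℕ) : wpow w (k + 1) = wpow w k ++ w := by
  rw [wpow_add w k 1]
  simp [wpow]

theorem styl_J_trivial' {A : Type*} [LinearOrder A] [Fintype A]
    (u v : stylMonoid A)
    (h : ∀ x : stylMonoid A,
      (∃ a b : stylMonoid A, x = a * u * b) ↔ (∃ a b : stylMonoid A, x = a * v * b)) :
    u = v := by
  obtain ⟨a, b, hab⟩ := (h u).mp ⟨1, 1, by rw [one_mul, mul_one]⟩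
  obtain ⟨c, d, hcd⟩ := (h v).mpr ⟨1, 1, by rw [one_mul, mul_one]⟩
  obtain ⟨wu, hwu⟩ := u.2
  obtain ⟨wv, hwv⟩ := v.2
  obtain ⟨wa, hwa⟩ := a.2
  obtain ⟨wb, hwb⟩ := b.2
  obtain ⟨wc, hwc⟩ := c.2
  obtain ⟨wd, hwd⟩ := d.2
  have hab' := congrArg Subtype.val hab
  have hcd' := congrArg Subtype.val hcd
  rw [Submonoid.coe_mul, Submonoid.coe_mul, ← hwu, ← hwv, ← hwa, ← hwb] at hab'
  rw [Submonoid.coe_mul, Submonoid.coe_mul, ← hwu, ← hwv, ← hwc, ← hwd] at hcd'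
  have H1 : ∀ γ : Finset A, colAct wu γ = colAct wa (colAct wv (colAct wb γ)) :=
    fun γ => congrFun hab' γ
  have H2 : ∀ γ : Finset A, colAct wv γ = colAct wc (colAct wu (colAct wd γ)) :=
    fun γ => congrFun hcd' γ
  set x := wa ++ wc with hx
  set y := wd ++ wb with hy
  have key : ∀ (k : ℕ) (γ : Finset A),
      colAct wu γ = colAct (wpow x k) (colAct wu (colAct (wpow y k) γ)) := by
    intro k
    induction k with
    | zero => intro γ; rfl
    | succ n ih =>
      intro γ
      have step1 : colAct wu γ
          = colAct wa (colAct wc (colAct wu (colAct (wd ++ wb) γ))) := by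
        rw [H1 γ, H2 (colAct wb γ), colAct_append]
      rw [step1, ih (colAct (wd ++ wb) γ)]
      have e2 : colAct (wpow y n) (colAct (wd ++ wb) γ) = colAct (wpow y (n + 1)) γ := by
        rw [wpow_succ_right, colAct_append (wpow y n) y γ]
      have e3 : ∀ δ : Finset A, colAct wa (colAct wc (colAct (wpow x n) δ))
          = colAct (wpow x (n + 1)) δ := by
        intro δ
        show _ = colAct (x ++ wpow x n) δ
        rw [colAct_append, hx, colAct_append]
      rw [e2, e3]
  have main : ∀ γ : Finset A, colAct wv γ = colAct wu γ := by
    intro γ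
    set K := phiBound A + 1 with hK
    have habsl : colAct wc (colAct (wpow x K) (colAct wu (colAct (wpow y K) (colAct wd γ))))
        = colAct (wpow x K) (colAct wu (colAct (wpow y K) (colAct wd γ))) := by
      rw [hK]
      exact absorb_left x wc (fun ch hch => by rw [hx]; exact List.mem_append_right _ hch) _
    have habsr : colAct (wpow y K) (colAct wd γ) = colAct (wpow y K) γ := by
      rw [hK]
      exact absorb_right y wd (fun ch hch => by rw [hy]; exact List.mem_append_left _ hch) γ
    rw [H2 γ, key K (colAct wd γ), habsl, habsr, ← key K γ]
  apply Subtype.ext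
  rw [← hwu, ← hwv]
  funext γ
  exact (main γ).symm

end Final


/-- `Styl(A)` is `J`-trivial: two elements generating the same two-sided ideal
are equal. -/
theorem styl_J_trivial {A : Type*} [LinearOrder A] [Fintype A]
    (u v : stylMonoid A)
    (h : ∀ x : stylMonoid A,
      (∃ a b : stylMonoid A, x = a * u * b) ↔ (∃ a b : stylMonoid A, x = a * v * b)) :
    u = v := by
  exact styl_J_trivial' u v h
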